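/- arXiv:2112.07039 — 2 statements merged into one kernel-verified Lean document; each statement's English description precedes it below -/
import Mathlib

section
/- Let (s, i) solve the SIR system ds/dt = -β i s, di/dt = β i s - γ i with β, γ > 0, s(0) = s₀ ∈ (0,1), i(0) = i₀ > 0, s₀ + i₀ ≤ 1. Let ĩ(t) = e^{(β-γ)t} i₀ solve the linearized equation dĩ/dt = (β - γ)ĩ, ĩ(0) = i₀. Then ĩ(t) ≥ i(t) for all t ≥ 0. -/
open Real

/-- The linearized infected compartment ĩ(t) = e^{(β-γ)t} i₀ dominates the true SIR
infected compartment i(t) for all t ≥ 0. -/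
theorem linearized_dominates_true_infected
    (β γ s₀ i₀ : ℝ) (hβ : 0 < β) (hγ : 0 < γ)
    (hs₀ : s₀ ∈ Set.Ioo (0 : ℝ) 1) (hi₀ : 0 < i₀) (hsum : s₀ + i₀ ≤ 1)
    (s i : ℝ → ℝ) (hs0 : s 0 = s₀) (hi0 : i 0 = i₀)
    (hs : ∀ t ∈ Set.Ici (0 : ℝ), HasDerivAt s (-β * i t * s t) t)
    (hi : ∀ t ∈ Set.Ici (0 : ℝ), HasDerivAt i (β * i t * s t - γ * i t) t) :
    ∀ t ∈ Set.Ici (0 : ℝ), i t ≤ Real.exp ((β - γ) * t) * i₀ := by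
  obtain ⟨hs₀0, hs₀1⟩ := hs₀
  have hsc : ∀ t : ℝ, 0 ≤ t → ContinuousAt s t := fun t ht => (hs t ht).continuousAt
  have hic : ∀ t : ℝ, 0 ≤ t → ContinuousAt i t := fun t ht => (hi t ht).continuousAt
  set S : ℝ → ℝ := fun t => s (max t 0) with hSdef
  set I : ℝ → ℝ := fun t => i (max t 0) with hIdef
  have hmaxc : Continuous fun t : ℝ => max t 0 := continuous_id.max continuous_const
  have hScont : Continuous S := by
    rw [continuous_iff_continuousAt]
    intro x
    have : ContinuousAt (s ∘ fun t => max t 0) x :=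
      ContinuousAt.comp (g := s) (f := fun t => max t 0) (x := x)
        (hsc _ (le_max_right x 0)) hmaxc.continuousAt
    exact this
  have hIcont : Continuous I := by
    rw [continuous_iff_continuousAt]
    intro x
    have : ContinuousAt (i ∘ fun t => max t 0) x :=
      ContinuousAt.comp (g := i) (f := fun t => max t 0) (x := x)
        (hic _ (le_max_right x 0)) hmaxc.continuousAt
    exact this
  have hSeq : ∀ t : ℝ, 0 ≤ t → S t = s t := fun t ht => by
    simp only [hSdef, max_eq_left ht]
  have hIeq : ∀ t : ℝ, 0 ≤ t → I t = i t := fun t ht => by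
    simp only [hIdef, max_eq_left ht]
  -- antiderivatives
  set A : ℝ → ℝ := fun t => ∫ u in (0:ℝ)..t, (β * S u - γ) with hAdef
  set B : ℝ → ℝ := fun t => ∫ u in (0:ℝ)..t, β * I u with hBdef
  have hA : ∀ t : ℝ, HasDerivAt A (β * S t - γ) t := fun t =>
    ((((continuous_const.mul hScont)).sub continuous_const).integral_hasStrictDerivAt 0 t).hasDerivAt
  have hB : ∀ t : ℝ, HasDerivAt B (β * I t) t := fun t =>
    (((continuous_const.mul hIcont)).integral_hasStrictDerivAt 0 t).hasDerivAt
  have hA0 : A 0 = 0 := intervalIntegral.integral_same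
  have hB0 : B 0 = 0 := intervalIntegral.integral_same
  -- positivity of i
  have hipos : ∀ t : ℝ, 0 ≤ t → 0 < i t := by
    intro t ht
    set F : ℝ → ℝ := fun u => i u * Real.exp (-A u) with hFdef
    have hFderiv : ∀ x : ℝ, 0 ≤ x → HasDerivAt F 0 x := by
      intro x hx
      have h1 : HasDerivAt (fun u => Real.exp (-A u)) (Real.exp (-A x) * -(β * S x - γ)) x :=
        (hA x).neg.exp
      have h2 := (hi x hx).mul h1
      have : (β * i x * s x - γ * i x) * Real.exp (-A x)
          + i x * (Real.exp (-A x) * -(β * S x - γ)) = 0 := by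
        rw [hSeq x hx]; ring
      rw [this] at h2
      exact h2
    have hFcont : ContinuousOn F (Set.Icc 0 t) := fun x hx =>
      ((hFderiv x hx.1).continuousAt).continuousWithinAt
    have hconst := constant_of_has_deriv_right_zero hFcont
      (fun x hx => (hFderiv x hx.1).hasDerivWithinAt)
    have := hconst t (Set.mem_Icc.2 ⟨ht, le_refl t⟩)
    have hF0 : F 0 = i₀ := by simp [hFdef, hA0, hi0]
    have hFt : i t * Real.exp (-A t) = i₀ := by rw [← hF0]; exact this
    have hmul : Real.exp (A t) * Real.exp (-A t) = 1 := by
      rw [← Real.exp_add]; simp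
    have : i t = i₀ * Real.exp (A t) :=
      calc i t = (Real.exp (A t) * Real.exp (-A t)) * i t := by rw [hmul, one_mul]
        _ = Real.exp (A t) * (i t * Real.exp (-A t)) := by ring
        _ = i₀ * Real.exp (A t) := by rw [hFt]; ring
    rw [this]
    exact mul_pos hi₀ (Real.exp_pos _)
  -- positivity of s
  have hspos : ∀ t : ℝ, 0 ≤ t → 0 < s t := by
    intro t ht
    set G : ℝ → ℝ := fun u => s u * Real.exp (B u) with hGdef
    have hGderiv : ∀ x : ℝ, 0 ≤ x → HasDerivAt G 0 x := by
      intro x hx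
      have h1 : HasDerivAt (fun u => Real.exp (B u)) (Real.exp (B x) * (β * I x)) x :=
        (hB x).exp
      have h2 := (hs x hx).mul h1
      have : -β * i x * s x * Real.exp (B x)
          + s x * (Real.exp (B x) * (β * I x)) = 0 := by
        rw [hIeq x hx]; ring
      rw [this] at h2
      exact h2
    have hGcont : ContinuousOn G (Set.Icc 0 t) := fun x hx =>
      ((hGderiv x hx.1).continuousAt).continuousWithinAt
    have hconst := constant_of_has_deriv_right_zero hGcont
      (fun x hx => (hGderiv x hx.1).hasDerivWithinAt)
    have hGt := hconst t (Set.mem_Icc.2 ⟨ht, le_refl t⟩)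
    have hG0 : G 0 = s₀ := by simp [hGdef, hB0, hs0]
    have hGt' : s t * Real.exp (B t) = s₀ := by rw [← hG0]; exact hGt
    nlinarith [Real.exp_pos (B t), mul_pos hs₀0 (Real.exp_pos (B t))]
  -- s ≤ 1
  have hsle : ∀ t : ℝ, 0 ≤ t → s t ≤ 1 := by
    intro t ht
    have hanti : AntitoneOn s (Set.Icc 0 t) := by
      apply antitoneOn_of_deriv_nonpos (convex_Icc 0 t)
      · exact fun x hx => ((hs x hx.1).continuousAt).continuousWithinAt
      · intro x hx
        rw [interior_Icc] at hx
        exact ((hs x hx.1.le).differentiableAt).differentiableWithinAt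
      · intro x hx
        rw [interior_Icc] at hx
        rw [(hs x hx.1.le).deriv]
        have h1 := hipos x hx.1.le
        have h2 := hspos x hx.1.le
        nlinarith [mul_pos (mul_pos hβ h1) h2]
    have := hanti (Set.left_mem_Icc.2 ht) (Set.mem_Icc.2 ⟨ht, le_refl t⟩) ht
    rw [hs0] at this
    linarith
  -- final comparison
  intro t ht
  rw [Set.mem_Ici] at ht
  set r : ℝ → ℝ := fun u => i u * Real.exp (-((β - γ) * u)) with hrdef
  have hrderiv : ∀ x : ℝ, 0 ≤ x →
      HasDerivAt r (Real.exp (-((β - γ) * x)) * (β * i x * (s x - 1))) x := by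
    intro x hx
    have h0 : HasDerivAt (fun u : ℝ => -((β - γ) * u)) (-(β - γ)) x := by
      exact (by simpa using ((hasDerivAt_id x).const_mul (β - γ)).neg :
        HasDerivAt (-fun u : ℝ => (β - γ) * u) (-(β - γ)) x)
    have h1 : HasDerivAt (fun u => Real.exp (-((β - γ) * u)))
        (Real.exp (-((β - γ) * x)) * -(β - γ)) x := h0.exp
    have h2 := (hi x hx).mul h1
    have : (β * i x * s x - γ * i x) * Real.exp (-((β - γ) * x))
        + i x * (Real.exp (-((β - γ) * x)) * -(β - γ))
        = Real.exp (-((β - γ) * x)) * (β * i x * (s x - 1)) := by ring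
    rw [this] at h2
    exact h2
  have hanti : AntitoneOn r (Set.Icc 0 t) := by
    apply antitoneOn_of_deriv_nonpos (convex_Icc 0 t)
    · exact fun x hx => ((hrderiv x hx.1).continuousAt).continuousWithinAt
    · intro x hx
      rw [interior_Icc] at hx
      exact ((hrderiv x hx.1.le).differentiableAt).differentiableWithinAt
    · intro x hx
      rw [interior_Icc] at hx
      rw [(hrderiv x hx.1.le).deriv]
      have h1 := hipos x hx.1.le
      have h2 := hsle x hx.1.le
      have h3 := Real.exp_pos (-((β - γ) * x))
      nlinarith [mul_nonneg h3.le
        (mul_nonneg (mul_pos hβ h1).le (by linarith : (0:ℝ) ≤ 1 - s x))]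
  have hr := hanti (Set.left_mem_Icc.2 ht) (Set.mem_Icc.2 ⟨ht, le_refl t⟩) ht
  have hr0 : r 0 = i₀ := by simp [hrdef, hi0]
  rw [hr0] at hr
  have hrt : i t * Real.exp (-((β - γ) * t)) ≤ i₀ := hr
  have hkey : Real.exp ((β - γ) * t) * Real.exp (-((β - γ) * t)) = 1 := by
    rw [← Real.exp_add]; simp
  calc i t = (Real.exp ((β - γ) * t) * Real.exp (-((β - γ) * t))) * i t := by
        rw [hkey, one_mul]
    _ = Real.exp ((β - γ) * t) * (i t * Real.exp (-((β - γ) * t))) := by ring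
    _ ≤ Real.exp ((β - γ) * t) * i₀ :=
        mul_le_mul_of_nonneg_left hrt (Real.exp_pos _).le
end

section
/- Let φ_t and φ̃_t be the true SIR trajectory and the linearized SIR trajectory starting from (s₀, i₀) with parameters (β, γ), β, γ > 0, δ = β - γ > 0, and assume 0 ≤ i(t)s(t) ≤ i(t) ≤ ĩ(t) = e^{δt}i₀ for all t. Then for all t ≥ 0, ‖φ̃_t - φ_t‖ ≤ (√(2β² + γ²)/δ)(e^{δt} - 1)·i₀, where ‖·‖ is the Euclidean norm on ℝ². -/
open Real

/-- Bound on the Euclidean distance between the true SIR trajectory and the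
linearized trajectory: ‖φ̃_t - φ_t‖ ≤ (√(2β² + γ²)/δ)(e^{δt} - 1) i₀ for t ≥ 0. -/
theorem linearized_error_single_trajectory
    (β γ δ s₀ i₀ : ℝ) (hβ : 0 < β) (hγ : 0 < γ) (hδ : δ = β - γ) (hδ0 : 0 < δ) (hi₀ : 0 < i₀)
    (s i : ℝ → ℝ) (hs0 : s 0 = s₀) (hi0 : i 0 = i₀)
    (hs : ∀ t ∈ Set.Ici (0 : ℝ), HasDerivAt s (-β * i t * s t) t)
    (hi : ∀ t ∈ Set.Ici (0 : ℝ), HasDerivAt i (β * i t * s t - γ * i t) t)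
    (hdom : ∀ t ∈ Set.Ici (0 : ℝ),
      0 ≤ i t * s t ∧ i t * s t ≤ i t ∧ i t ≤ Real.exp (δ * t) * i₀) :
    ∀ t ∈ Set.Ici (0 : ℝ),
      Real.sqrt (((s₀ - (β / δ) * (Real.exp (δ * t) - 1) * i₀) - s t) ^ 2 +
          (Real.exp (δ * t) * i₀ - i t) ^ 2)
        ≤ (Real.sqrt (2 * β ^ 2 + γ ^ 2) / δ) * (Real.exp (δ * t) - 1) * i₀ := by
  intro t ht
  simp only [Set.mem_Ici] at ht
  have hδne : δ ≠ 0 := ne_of_gt hδ0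
  set C : ℝ := Real.sqrt (2 * β ^ 2 + γ ^ 2) with hCdef
  have hC0 : 0 ≤ C := Real.sqrt_nonneg _
  set E : ℝ → EuclideanSpace ℝ (Fin 2) := fun τ =>
    (WithLp.equiv 2 (Fin 2 → ℝ)).symm
      ![s₀ - (β / δ) * (Real.exp (δ * τ) - 1) * i₀ - s τ, Real.exp (δ * τ) * i₀ - i τ] with hEdef
  set E' : ℝ → EuclideanSpace ℝ (Fin 2) := fun τ =>
    (WithLp.equiv 2 (Fin 2 → ℝ)).symm
      ![β * (i τ * s τ) - β * Real.exp (δ * τ) * i₀,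
        δ * Real.exp (δ * τ) * i₀ - (β * i τ * s τ - γ * i τ)] with hE'def
  have hexp : ∀ τ : ℝ, HasDerivAt (fun x => Real.exp (δ * x)) (δ * Real.exp (δ * τ)) τ := by
    intro τ
    have h1 : HasDerivAt (fun x : ℝ => δ * x) δ τ := by
      simpa using (hasDerivAt_id τ).const_mul δ
    exact ((Real.hasDerivAt_exp (δ * τ)).comp τ h1).congr_deriv (mul_comm _ _)
  have hEderiv : ∀ τ ∈ Set.Ici (0 : ℝ), HasDerivAt E (E' τ) τ := by
    intro τ hτ
    have h0 : HasDerivAt (fun x => s₀ - (β / δ) * (Real.exp (δ * x) - 1) * i₀ - s x)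
        (β * (i τ * s τ) - β * Real.exp (δ * τ) * i₀) τ := by
      have ha : HasDerivAt (fun x => s₀ - (β / δ) * (Real.exp (δ * x) - 1) * i₀)
          (-(β * Real.exp (δ * τ) * i₀)) τ := by
        have h2 := (hasDerivAt_const τ s₀).sub ((((hexp τ).sub_const 1).const_mul (β / δ)).mul_const i₀)
        refine h2.congr_deriv ?_
        field_simp
        ring
      have h3 := ha.sub (hs τ hτ)
      refine h3.congr_deriv ?_
      ring
    have h1 : HasDerivAt (fun x => Real.exp (δ * x) * i₀ - i x)
        (δ * Real.exp (δ * τ) * i₀ - (β * i τ * s τ - γ * i τ)) τ :=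
      ((hexp τ).mul_const i₀).sub (hi τ hτ)
    have hF : HasDerivAt (fun x => ![s₀ - (β / δ) * (Real.exp (δ * x) - 1) * i₀ - s x,
        Real.exp (δ * x) * i₀ - i x])
        (![β * (i τ * s τ) - β * Real.exp (δ * τ) * i₀,
          δ * Real.exp (δ * τ) * i₀ - (β * i τ * s τ - γ * i τ)] : Fin 2 → ℝ) τ := by
      rw [hasDerivAt_pi]
      intro j
      fin_cases j
      · exact h0
      · exact h1
    exact ((EuclideanSpace.equiv (Fin 2) ℝ).symm.toContinuousLinearMap.hasFDerivAt).comp_hasDerivAt τ hF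
  have hscont : ContinuousOn s (Set.Ici 0) := fun τ hτ => (hs τ hτ).continuousAt.continuousWithinAt
  have hicont : ContinuousOn i (Set.Ici 0) := fun τ hτ => (hi τ hτ).continuousAt.continuousWithinAt
  have hexpc : Continuous (fun τ : ℝ => Real.exp (δ * τ)) :=
    Real.continuous_exp.comp (continuous_const.mul continuous_id)
  have c0 : ContinuousOn (fun τ => β * (i τ * s τ) - β * Real.exp (δ * τ) * i₀) (Set.Ici 0) :=
    (continuousOn_const.mul (hicont.mul hscont)).sub
      (((continuous_const.mul hexpc).mul continuous_const).continuousOn)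
  have c1 : ContinuousOn (fun τ => δ * Real.exp (δ * τ) * i₀ - (β * i τ * s τ - γ * i τ))
      (Set.Ici 0) :=
    (((continuous_const.mul hexpc).mul continuous_const).continuousOn).sub
      (((continuousOn_const.mul hicont).mul hscont).sub (continuousOn_const.mul hicont))
  have hE'cont : ContinuousOn E' (Set.Ici 0) := by
    apply ((EuclideanSpace.equiv (Fin 2) ℝ).symm.continuous).comp_continuousOn
    apply continuousOn_pi.2
    intro j
    fin_cases j
    · exact c0
    · exact c1
  have huIcc : Set.uIcc (0:ℝ) t ⊆ Set.Ici 0 := by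
    rw [Set.uIcc_of_le ht]
    exact fun x hx => hx.1
  have hint : IntervalIntegrable E' MeasureTheory.volume 0 t :=
    (hE'cont.mono huIcc).intervalIntegrable
  have hFTC : (∫ τ in (0:ℝ)..t, E' τ) = E t - E 0 :=
    intervalIntegral.integral_eq_sub_of_hasDerivAt (fun τ hτ => hEderiv τ (huIcc hτ)) hint
  have hbound : ∀ τ ∈ Set.Ici (0:ℝ), ‖E' τ‖ ≤ C * (Real.exp (δ * τ) * i₀) := by
    intro τ hτ
    obtain ⟨hd1, hd2, hd3⟩ := hdom τ hτ
    set M : ℝ := Real.exp (δ * τ) * i₀ with hM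
    have hM0 : 0 ≤ M := le_trans (le_trans hd1 hd2) hd3
    have hx0 : 0 ≤ M - i τ * s τ := sub_nonneg.2 (le_trans hd2 hd3)
    have hxM : M - i τ * s τ ≤ M := by linarith
    have hy0 : 0 ≤ M - i τ := sub_nonneg.2 hd3
    have hyM : M - i τ ≤ M := by linarith [le_trans hd1 hd2]
    have hx2 : (M - i τ * s τ) ^ 2 ≤ M ^ 2 := pow_le_pow_left₀ hx0 hxM 2
    have hy2 : (M - i τ) ^ 2 ≤ M ^ 2 := pow_le_pow_left₀ hy0 hyM 2
    have hxy : 0 ≤ (M - i τ * s τ) * (M - i τ) := mul_nonneg hx0 hy0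
    have hkey : (β * (i τ * s τ) - β * M) ^ 2 +
        (δ * M - (β * i τ * s τ - γ * i τ)) ^ 2 ≤ (2 * β ^ 2 + γ ^ 2) * M ^ 2 := by
      have hexpand : (β * (i τ * s τ) - β * M) ^ 2 +
          (δ * M - (β * i τ * s τ - γ * i τ)) ^ 2
          = 2 * β ^ 2 * (M - i τ * s τ) ^ 2
            - 2 * (β * γ) * ((M - i τ * s τ) * (M - i τ)) + γ ^ 2 * (M - i τ) ^ 2 := by
        rw [hδ]; ring
      rw [hexpand]
      have hb1 := mul_le_mul_of_nonneg_left hx2 (sq_nonneg β)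
      have hb2 := mul_le_mul_of_nonneg_left hy2 (sq_nonneg γ)
      have hb3 := mul_nonneg (mul_pos hβ hγ).le hxy
      nlinarith [hb1, hb2, hb3]
    have hnorm : ‖E' τ‖ = Real.sqrt ((β * (i τ * s τ) - β * M) ^ 2 +
        (δ * M - (β * i τ * s τ - γ * i τ)) ^ 2) := by
      simp only [hE'def, EuclideanSpace.norm_eq, Fin.sum_univ_two, Real.norm_eq_abs, sq_abs,
        WithLp.equiv_symm_apply, WithLp.ofLp_toLp, Matrix.cons_val_zero, Matrix.cons_val_one, Matrix.head_cons]
      rw [hM]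
      ring_nf
    rw [hnorm]
    calc Real.sqrt _ ≤ Real.sqrt ((2 * β ^ 2 + γ ^ 2) * M ^ 2) := Real.sqrt_le_sqrt hkey
      _ = C * M := by rw [Real.sqrt_mul (by positivity), Real.sqrt_sq hM0]
  have hG : ∀ τ : ℝ, HasDerivAt (fun x => C * i₀ / δ * Real.exp (δ * x))
      (C * (Real.exp (δ * τ) * i₀)) τ := by
    intro τ
    have h4 := (hexp τ).const_mul (C * i₀ / δ)
    refine h4.congr_deriv ?_
    field_simp
  have hgint : IntervalIntegrable (fun τ => C * (Real.exp (δ * τ) * i₀))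
      MeasureTheory.volume 0 t :=
    (continuous_const.mul ((Real.continuous_exp.comp
      (continuous_const.mul continuous_id)).mul continuous_const)).intervalIntegrable _ _
  have hIg : (∫ τ in (0:ℝ)..t, C * (Real.exp (δ * τ) * i₀))
      = C * i₀ / δ * Real.exp (δ * t) - C * i₀ / δ * Real.exp (δ * 0) :=
    intervalIntegral.integral_eq_sub_of_hasDerivAt (fun τ _ => hG τ) hgint
  have hae : ∀ᵐ τ ∂(MeasureTheory.volume.restrict (Set.uIoc (0:ℝ) t)),
      ‖E' τ‖ ≤ C * (Real.exp (δ * τ) * i₀) := by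
    apply MeasureTheory.ae_restrict_of_forall_mem measurableSet_uIoc
    intro τ hτ
    rw [Set.uIoc_of_le ht] at hτ
    exact hbound τ (le_of_lt hτ.1)
  have hmain : ‖E t - E 0‖ ≤ |∫ τ in (0:ℝ)..t, C * (Real.exp (δ * τ) * i₀)| := by
    rw [← hFTC]
    exact intervalIntegral.norm_integral_le_abs_of_norm_le hae hgint
  have hE0 : E 0 = 0 := by
    ext j
    fin_cases j <;> simp [hEdef, hs0, hi0]
  have hexp1 : (1:ℝ) ≤ Real.exp (δ * t) := by
    rw [← Real.exp_zero]
    exact Real.exp_le_exp.2 (mul_nonneg hδ0.le ht)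
  have hLHS : Real.sqrt (((s₀ - (β / δ) * (Real.exp (δ * t) - 1) * i₀) - s t) ^ 2 +
      (Real.exp (δ * t) * i₀ - i t) ^ 2) = ‖E t‖ := by
    simp only [hEdef, EuclideanSpace.norm_eq, Fin.sum_univ_two, Real.norm_eq_abs, sq_abs,
      WithLp.equiv_symm_apply, WithLp.ofLp_toLp, Matrix.cons_val_zero, Matrix.cons_val_one, Matrix.head_cons]
  rw [hLHS]
  calc ‖E t‖ = ‖E t - E 0‖ := by rw [hE0, sub_zero]
    _ ≤ |∫ τ in (0:ℝ)..t, C * (Real.exp (δ * τ) * i₀)| := hmain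
    _ = C * i₀ / δ * Real.exp (δ * t) - C * i₀ / δ * Real.exp (δ * 0) := by
        rw [hIg]
        apply abs_of_nonneg
        have : C * i₀ / δ * Real.exp (δ * 0) ≤ C * i₀ / δ * Real.exp (δ * t) := by
          apply mul_le_mul_of_nonneg_left _ (by positivity)
          simpa using hexp1
        linarith
    _ = C / δ * (Real.exp (δ * t) - 1) * i₀ := by
        rw [mul_zero, Real.exp_zero]
        field_simp
end
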